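/- With the data below, for each k > 0 define w_k(t, i) := (exp((T − t)·A(k))·𝟏)_i, and the optimal fees p*_k(t, i) := (1/(k·Z⁺_i·Δ⁺_i))·( 1 + log( w_k(t, i) / w_k(t, i+1) ) ) for i < 2N and m*_k(t, i) := (1/(k·Z⁻_i·Δ⁻_i))·( 1 + log( w_k(t, i) / w_k(t, i−1) ) ) for i > 0. Define also w₀(t, i) := (exp((T − t)·A₀)·𝟏)_i and the limit fees p*₀(t, i) := (1/(Z⁺_i·Δ⁺_i))·( 1 + log( w₀(t, i) / w₀(t, i+1) ) ) for i < 2N and m*₀(t, i) := (1/(Z⁻_i·Δ⁻_i))·( 1 + log( w₀(t, i) / w₀(t, i−1) ) ) for i > 0. Then for every t ∈ [0, T]: k·p*_k(t, i) tends to p*₀(t, i) as k tends to 0 from the right, for every i ∈ {0, …, 2N−1}; and k·m*_k(t, i) tends to m*₀(t, i) as k tends to 0 from the right, for every i ∈ {1, …, 2N}. -/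

import Mathlib

/-!
Since `k · p*_k(t,i) = (1 / (Z⁺_i Δ⁺_i)) (1 + log (w_k(t,i) / w_k(t,i+1)))` for `k > 0`, it is
enough that `w_k(t,·) → w₀(t,·)` with `w₀(t,·)` positive. The entries of `A(k)` depend
continuously on `k ∈ ℝ` and equal those of `A₀` at `k = 0`, so the convergence follows from the
continuity of the matrix exponential. Positivity holds because `(T - t) A₀` is entrywise
nonnegative, so its exponential dominates the identity entrywise.
-/

open Filter Topology NormedSpace

namespace Matrix

variable {m : Type*} [Fintype m] [DecidableEq m]

theorem continuous_exp : Continuous (exp : Matrix m m ℝ → Matrix m m ℝ) := by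
  let : NormedRing (Matrix m m ℝ) := Matrix.linftyOpNormedRing
  let : NormedAlgebra ℝ (Matrix m m ℝ) := Matrix.linftyOpNormedAlgebra
  let : NormedAlgebra ℚ (Matrix m m ℝ) := NormedAlgebra.restrictScalars ℚ ℝ _
  exact exp_continuous

theorem hasSum_exp_apply (M : Matrix m m ℝ) (i j : m) :
    HasSum (fun n : ℕ => (n.factorial : ℝ)⁻¹ * (M ^ n) i j) (exp M i j) := by
  let : NormedRing (Matrix m m ℝ) := Matrix.linftyOpNormedRing
  let : NormedAlgebra ℝ (Matrix m m ℝ) := Matrix.linftyOpNormedAlgebra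
  exact Pi.hasSum.1 (Pi.hasSum.1 (exp_series_hasSum_exp' (𝕂 := ℝ) M) i) j

theorem one_apply_le_exp_apply {M : Matrix m m ℝ} (hM : ∀ i j, 0 ≤ M i j) (i j : m) :
    (1 : Matrix m m ℝ) i j ≤ exp M i j := by
  simpa using le_hasSum (hasSum_exp_apply M i j) 0 fun n _ =>
    mul_nonneg (by positivity) (pow_apply_nonneg hM n i j)

theorem exp_mulVec_one_pos {M : Matrix m m ℝ} (hM : ∀ i j, 0 ≤ M i j) (i : m) :
    0 < (exp M *ᵥ 1) i :=
  calc (0 : ℝ) < ((1 : Matrix m m ℝ) *ᵥ 1) i := by simp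
    _ ≤ (exp M *ᵥ 1) i := by
      simp only [mulVec, dotProduct, Pi.one_apply, mul_one]
      exact Finset.sum_le_sum fun j _ => one_apply_le_exp_apply hM i j

end Matrix

theorem tendsto_mul_one_div_mul_mul {l : Filter ℝ} (hl : ∀ᶠ k in l, k ≠ 0) {f : ℝ → ℝ} {a : ℝ}
    (hf : Tendsto f l (𝓝 a)) (c : ℝ) :
    Tendsto (fun k => k * (1 / (k * c) * f k)) l (𝓝 (1 / c * a)) :=
  (tendsto_const_nhds.mul hf).congr' <| hl.mono fun k hk => by
    simp only [one_div_mul_eq_div, ← mul_div_assoc, mul_div_mul_left _ _ hk]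

/-- Small-`k` limit of the optimal AMM fees: as the intensity-decay parameter `k`
tends to `0` from the right, `k · p*_k(t,i)` and `k · m*_k(t,i)` converge to the
limit fees `p*₀(t,i)` and `m*₀(t,i)` built from the limit matrix `A₀`. -/
theorem stmt8 (N : ℕ)
    (Δp Δm Zp Zm P : Fin (2 * N + 1) → ℝ)
    (lp lm s T : ℝ) (hlp : 0 < lp) (hlm : 0 < lm)
    (A : ℝ → Matrix (Fin (2 * N + 1)) (Fin (2 * N + 1)) ℝ)
    (hA : ∀ k : ℝ, 0 < k → ∀ i j : Fin (2 * N + 1), A k i j =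
      if (j : ℕ) = (i : ℕ) then -(k * P i)
      else if (j : ℕ) = (i : ℕ) + 1 then
        lp * Real.exp (-(k * s * Δp i) - 1) * Real.exp (k * Zp i * Δp i)
      else if (j : ℕ) + 1 = (i : ℕ) then
        lm * Real.exp (k * s * Δm i - 1) * Real.exp (-(k * Zm i * Δm i))
      else 0)
    (A0 : Matrix (Fin (2 * N + 1)) (Fin (2 * N + 1)) ℝ)
    (hA0 : ∀ i j : Fin (2 * N + 1), A0 i j =
      if (j : ℕ) = (i : ℕ) + 1 then lp * Real.exp (-1)
      else if (j : ℕ) + 1 = (i : ℕ) then lm * Real.exp (-1)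
      else 0)
    (w : ℝ → ℝ → Fin (2 * N + 1) → ℝ)
    (hw : ∀ k : ℝ, 0 < k → ∀ t : ℝ,
      w k t = (NormedSpace.exp ((T - t) • A k)).mulVec 1)
    (w0 : ℝ → Fin (2 * N + 1) → ℝ)
    (hw0 : ∀ t : ℝ, w0 t = (NormedSpace.exp ((T - t) • A0)).mulVec 1)
    -- the optimal fees for decay parameter `k > 0`
    (pstar mstar : ℝ → ℝ → Fin (2 * N + 1) → ℝ)
    (hpstar : ∀ k : ℝ, 0 < k → ∀ t : ℝ, ∀ i : Fin (2 * N + 1), ∀ h : (i : ℕ) < 2 * N,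
      pstar k t i = (1 / (k * Zp i * Δp i)) *
        (1 + Real.log (w k t i / w k t ⟨(i : ℕ) + 1, by omega⟩)))
    (hmstar : ∀ k : ℝ, 0 < k → ∀ t : ℝ, ∀ i : Fin (2 * N + 1), ∀ h : 0 < (i : ℕ),
      mstar k t i = (1 / (k * Zm i * Δm i)) *
        (1 + Real.log (w k t i / w k t ⟨(i : ℕ) - 1, by omega⟩)))
    -- the limit fees
    (pstar0 mstar0 : ℝ → Fin (2 * N + 1) → ℝ)
    (hpstar0 : ∀ t : ℝ, ∀ i : Fin (2 * N + 1), ∀ h : (i : ℕ) < 2 * N,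
      pstar0 t i = (1 / (Zp i * Δp i)) *
        (1 + Real.log (w0 t i / w0 t ⟨(i : ℕ) + 1, by omega⟩)))
    (hmstar0 : ∀ t : ℝ, ∀ i : Fin (2 * N + 1), ∀ h : 0 < (i : ℕ),
      mstar0 t i = (1 / (Zm i * Δm i)) *
        (1 + Real.log (w0 t i / w0 t ⟨(i : ℕ) - 1, by omega⟩))) :
    ∀ t ∈ Set.Icc (0 : ℝ) T,
      (∀ i : Fin (2 * N + 1), (i : ℕ) < 2 * N →
        Filter.Tendsto (fun k : ℝ => k * pstar k t i) (nhdsWithin 0 (Set.Ioi 0))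
          (nhds (pstar0 t i))) ∧
      (∀ i : Fin (2 * N + 1), 0 < (i : ℕ) →
        Filter.Tendsto (fun k : ℝ => k * mstar k t i) (nhdsWithin 0 (Set.Ioi 0))
          (nhds (mstar0 t i))) := by
  intro t ht
  have hA_lim : Tendsto A (𝓝[>] 0) (𝓝 A0) := by
    refine tendsto_pi_nhds.2 fun i => tendsto_pi_nhds.2 fun j => ?_
    refine Tendsto.congr' (eventually_nhdsWithin_of_forall fun k hk => (hA k hk i j).symm) ?_
    -- the formula for `A k` is continuous in `k ∈ ℝ` and reduces to `A0` at `k = 0`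
    refine tendsto_nhdsWithin_of_tendsto_nhds (Continuous.tendsto' ?_ 0 _ ?_)
    · repeat' refine continuous_if_const _ (fun _ => ?_) (fun _ => ?_)
      all_goals fun_prop
    · rw [hA0]
      split_ifs <;> first | omega | simp
  have hw_lim : Tendsto (fun k => w k t) (𝓝[>] 0) (𝓝 (w0 t)) := by
    rw [hw0]
    refine ((Matrix.continuous_exp.comp (continuous_const_smul (T - t))).matrix_mulVec
      continuous_const |>.tendsto A0 |>.comp hA_lim).congr'
      (eventually_nhdsWithin_of_forall fun k hk => (hw k hk t).symm)
  have hw0_pos : ∀ i, 0 < w0 t i := by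
    rw [hw0]
    refine Matrix.exp_mulVec_one_pos fun i j => mul_nonneg (sub_nonneg.2 ht.2) ?_
    rw [hA0]
    split_ifs <;> positivity
  have hlog_lim : ∀ i j, Tendsto (fun k => Real.log (w k t i / w k t j)) (𝓝[>] 0)
      (𝓝 (Real.log (w0 t i / w0 t j))) := fun i j =>
    (((tendsto_pi_nhds.1 hw_lim i).div (tendsto_pi_nhds.1 hw_lim j) (hw0_pos j).ne').log
      (div_pos (hw0_pos i) (hw0_pos j)).ne')
  have hk_ne : ∀ᶠ k : ℝ in 𝓝[>] 0, k ≠ 0 := eventually_nhdsWithin_of_forall fun k hk => hk.ne'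
  refine ⟨fun i hi => ?_, fun i hi => ?_⟩
  · rw [hpstar0 t i hi]
    refine (tendsto_mul_one_div_mul_mul hk_ne (tendsto_const_nhds.add (hlog_lim _ _)) _).congr' ?_
    filter_upwards [self_mem_nhdsWithin] with k hk using by rw [hpstar k hk t i hi, mul_assoc]
  · rw [hmstar0 t i hi]
    refine (tendsto_mul_one_div_mul_mul hk_ne (tendsto_const_nhds.add (hlog_lim _ _)) _).congr' ?_
    filter_upwards [self_mem_nhdsWithin] with k hk using by rw [hmstar k hk t i hi, mul_assoc]
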